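/- Let α > 0, f₀ > 0, τ > 0, h⁺ > 0, h⁻ > 0, t ≥ 0 and x ∈ ℝ. Set T = t + α, x̂ = x·(T + τ)/T, Δx = x̂ − x, and define u = f₀·(α/T)^{1/2}·exp(−x²/(4T)), u₊ = f₀·(α/T)^{1/2}·exp(−(x+h⁺)²/(4T)), u₋ = f₀·(α/T)^{1/2}·exp(−(x−h⁻)²/(4T)), û = f₀·(α/(T+τ))^{1/2}·exp(−x̂²/(4(T+τ))). Then both equations of the invariant difference model for the heat equation hold: (i) Δx = (2τ/(h⁺+h⁻))·( −(h⁻/h⁺)·ln(u₊/u) + (h⁺/h⁻)·ln(u₋/u) ), and (ii) (u/û)²·exp(−(Δx)²/(2τ)) = 1 − (4τ/(h⁺+h⁻))·( (1/h⁺)·ln(u₊/u) + (1/h⁻)·ln(u₋/u) ). In particular (formally letting α → 0) the fundamental solution u = C·t^{-1/2}·exp(−x²/(4t)) on the moving mesh Δx = (τ/t)·x is an exact solution of the invariant scheme. -/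
import Mathlib


open Real

/-- The fundamental-type solution `u = f₀·(α/(t+α))^{1/2}·exp(−x²/(4(t+α)))` on
the moving mesh `x̂ = x(t+α+τ)/(t+α)` exactly satisfies both equations of the
invariant difference model for the heat equation `u_t = u_xx`. -/
theorem fundamental_solution_satisfies_invariant_heat_scheme
    (α f₀ τ hp hm t x : ℝ)
    (hα : 0 < α) (hf₀ : 0 < f₀) (hτ : 0 < τ) (hhp : 0 < hp) (hhm : 0 < hm)
    (ht : 0 ≤ t)
    (T xh Δx : ℝ) (hT : T = t + α) (hxh : xh = x * (T + τ) / T) (hΔx : Δx = xh - x)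
    (u up um uh : ℝ)
    (hu : u = f₀ * (α / T) ^ ((1 : ℝ) / 2) * Real.exp (-(x ^ 2) / (4 * T)))
    (hup : up = f₀ * (α / T) ^ ((1 : ℝ) / 2) * Real.exp (-((x + hp) ^ 2) / (4 * T)))
    (hum : um = f₀ * (α / T) ^ ((1 : ℝ) / 2) * Real.exp (-((x - hm) ^ 2) / (4 * T)))
    (huh : uh = f₀ * (α / (T + τ)) ^ ((1 : ℝ) / 2)
        * Real.exp (-(xh ^ 2) / (4 * (T + τ)))) :
    (Δx = (2 * τ / (hp + hm))
        * (-(hm / hp) * Real.log (up / u) + (hp / hm) * Real.log (um / u))) ∧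
    ((u / uh) ^ 2 * Real.exp (-(Δx ^ 2) / (2 * τ))
      = 1 - (4 * τ / (hp + hm))
          * ((1 / hp) * Real.log (up / u) + (1 / hm) * Real.log (um / u))) := by
  have hT0 : 0 < T := by rw [hT]; linarith
  have hTτ : 0 < T + τ := by linarith
  have hC0 : (0:ℝ) < f₀ * (α / T) ^ ((1 : ℝ) / 2) :=
    mul_pos hf₀ (Real.rpow_pos_of_pos (div_pos hα hT0) _)
  have hlog : ∀ a b : ℝ,
      Real.log (f₀ * (α / T) ^ ((1 : ℝ) / 2) * Real.exp a /
        (f₀ * (α / T) ^ ((1 : ℝ) / 2) * Real.exp b)) = a - b := by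
    intro a b
    rw [mul_div_mul_left _ _ (ne_of_gt hC0), ← Real.exp_sub, Real.log_exp]
  have hlp : Real.log (up / u)
      = -((x + hp) ^ 2) / (4 * T) - (-(x ^ 2) / (4 * T)) := by
    rw [hup, hu]; exact hlog _ _
  have hlm : Real.log (um / u)
      = -((x - hm) ^ 2) / (4 * T) - (-(x ^ 2) / (4 * T)) := by
    rw [hum, hu]; exact hlog _ _
  have hP2 : ((α / T) ^ ((1 : ℝ) / 2)) ^ (2:ℕ) = α / T := by
    rw [← Real.rpow_natCast (_ ^ _), ← Real.rpow_mul (div_pos hα hT0).le]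
    norm_num
  have hQ2 : ((α / (T + τ)) ^ ((1 : ℝ) / 2)) ^ (2:ℕ) = α / (T + τ) := by
    rw [← Real.rpow_natCast (_ ^ _), ← Real.rpow_mul (div_pos hα hTτ).le]
    norm_num
  constructor
  · rw [hΔx, hxh, hlp, hlm]
    field_simp
    ring
  · rw [hlp, hlm]
    have hL : (u / uh) ^ 2 * Real.exp (-(Δx ^ 2) / (2 * τ)) = (T + τ) / T := by
      rw [hu, huh]
      simp only [div_pow, mul_pow]
      rw [hP2, hQ2,
        sq (Real.exp _), sq (Real.exp _), ← Real.exp_add, ← Real.exp_add,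
        div_mul_eq_mul_div]
      have hE : Real.exp (-(x ^ 2) / (4 * T) + -(x ^ 2) / (4 * T))
            * Real.exp (-(Δx ^ 2) / (2 * τ))
          = Real.exp (-(xh ^ 2) / (4 * (T + τ)) + -(xh ^ 2) / (4 * (T + τ))) := by
        rw [← Real.exp_add]
        congr 1
        rw [hΔx, hxh]
        field_simp
        ring
      rw [mul_assoc, hE]
      rw [div_eq_div_iff (by positivity) (ne_of_gt hT0)]
      field_simp
    rw [hL]
    field_simp
    ring
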